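/- arXiv:math/0101237 — 2 statements merged into one kernel-verified Lean document; each statement's English description precedes it below -/
import Mathlib

section
/- Let F: ℝⁿ × ℂⁿ → ℝ be C² away from 0 with F(y, λz) = |λ|²F(y,z), and define a_{jk} − i b_{jk} := 2∂²F/∂z^j ∂z^k. Then a_{jk} = b_{jk} = 0 for all (y,z) with z ≠ 0 if and only if F has the form F(y,z) = ½ h_{jk}(y) conj(z^j) z^k for some Hermitian tensor h_{jk}(y) independent of z (necessarily h_{jk} = 2∂²F/∂z̄^j∂z^k). -/
open scoped BigOperators

/-- Second derivative of `F(y, ·)` at `z` in the (outer, inner) directions `(v, w)`. -/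
noncomputable def secondDeriv (n : ℕ) (F : (Fin n → ℝ) → (Fin n → ℂ) → ℝ)
    (y : Fin n → ℝ) (z v w : Fin n → ℂ) : ℝ :=
  fderiv ℝ (fun x : Fin n → ℂ => fderiv ℝ (F y) x w) z v

/-- Real coordinate direction `∂/∂z^j_1`. -/
noncomputable def dir1 (n : ℕ) (j : Fin n) : Fin n → ℂ := Pi.single j 1

/-- Imaginary coordinate direction `∂/∂z^j_2`. -/
noncomputable def dir2 (n : ℕ) (j : Fin n) : Fin n → ℂ := Pi.single j Complex.I

/-- `a_{jk} := ½(G^{11}_{jk} − G^{22}_{jk})`, real part of `2∂²F/∂z^j∂z^k`. -/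
noncomputable def aTensor (n : ℕ) (F : (Fin n → ℝ) → (Fin n → ℂ) → ℝ)
    (y : Fin n → ℝ) (z : Fin n → ℂ) (j k : Fin n) : ℝ :=
  (1 / 2) * (secondDeriv n F y z (dir1 n j) (dir1 n k)
    - secondDeriv n F y z (dir2 n j) (dir2 n k))

/-- `b_{jk} := ½(G^{12}_{jk} + G^{21}_{jk})`, negative imaginary part of `2∂²F/∂z^j∂z^k`. -/
noncomputable def bTensor (n : ℕ) (F : (Fin n → ℝ) → (Fin n → ℂ) → ℝ)
    (y : Fin n → ℝ) (z : Fin n → ℂ) (j k : Fin n) : ℝ :=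
  (1 / 2) * (secondDeriv n F y z (dir1 n j) (dir2 n k)
    + secondDeriv n F y z (dir2 n j) (dir1 n k))

/-!
Vanishing of `a` and `b` says exactly that the real Hessian of `f = F(y, ·)` is invariant under
`(v, w) ↦ (i v, i w)`. This invariance is the Cauchy–Riemann system for
`z ↦ ∂̄f(z) · w̄`, which is therefore holomorphic on `ℂⁿ ∖ {0}`; homogeneity makes it
`ℂ`-homogeneous of degree one, and Liouville's theorem on the complex lines `u + ℂ v` makes it
additive, hence `ℂ`-linear. Euler's identity `f(z) = ½ Df(z) z = Re (∂̄f(z) · z̄)` then writes `f` as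
the real part of a sesquilinear form, whose Hermitian part is `h`. Conversely, the Hessian of the
real part of a sesquilinear form is `i`-invariant.
-/

open Complex Filter Topology
open scoped ComplexConjugate Matrix

section ComplexStructure

variable {E F : Type*} [AddCommGroup E] [Module ℂ E] [AddCommGroup F] [Module ℝ F]

theorem map_complex_smul_eq {G : Type*} [FunLike G E F] [LinearMapClass G ℝ E F] (L : G)
    (c : ℂ) (v : E) : L (c • v) = c.re • L v + c.im • L (I • v) := by
  conv_lhs => rw [← re_add_im c, add_smul, mul_smul, coe_smul, coe_smul]
  rw [map_add, map_smul, map_smul]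

end ComplexStructure

section ComplexDifferentiability

variable {E F : Type*} [NormedAddCommGroup E] [NormedSpace ℂ E]
  [NormedAddCommGroup F] [NormedSpace ℂ F]

theorem HasFDerivAt.differentiableAt_complex {g : E → F} {M : E →L[ℝ] F} {z : E}
    (hg : HasFDerivAt g M z) (hM : ∀ v, M (I • v) = I • M v) : DifferentiableAt ℂ g z := by
  let M' : E →L[ℂ] F :=
    { toFun := M
      map_add' := M.map_add
      map_smul' := fun c v => by
        rw [RingHom.id_apply, map_complex_smul_eq, hM, ← coe_smul, ← coe_smul, smul_smul,
          ← add_smul, re_add_im]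
      cont := M.continuous }
  exact (hasFDerivAt_of_restrictScalars ℝ hg (f' := M') rfl).differentiableAt

/-- When the line `a ↦ u + a v` misses the origin, `g(u + a v) - a g(v)` is entire and tends to
`Dg(v) u` at infinity, hence is constant by Liouville's theorem. -/
theorem map_add_of_map_smul_of_differentiableAt {g : E → F}
    (hsmul : ∀ (c : ℂ) x, g (c • x) = c • g x) (hdiff : ∀ x ≠ 0, DifferentiableAt ℂ g x)
    (u v : E) : g (u + v) = g u + g v := by
  have hg0 : g 0 = 0 := by simpa using hsmul 0 0
  rcases eq_or_ne v 0 with rfl | hv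
  · simp [hg0]
  by_cases hdep : ∃ a : ℂ, u + a • v = 0
  · obtain ⟨a, ha⟩ := hdep
    obtain rfl : u = (-a) • v := by rw [neg_smul]; exact eq_neg_of_add_eq_zero_left ha
    rw [show (-a) • v + v = (-a + 1) • v by rw [add_smul, one_smul], hsmul, hsmul, add_smul,
      one_smul]
  push Not at hdep
  set ψ : ℂ → F := fun a => g (u + a • v) - a • g v
  have hψ : Differentiable ℂ ψ := fun a =>
    ((hdiff _ (hdep a)).comp a ((differentiableAt_id.smul_const v).const_add u)).sub
      (differentiableAt_id.smul_const _)
  have hslope : Tendsto (fun t : ℂ => t⁻¹ • (g (v + t • u) - g v)) (𝓝[≠] 0)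
      (𝓝 (fderiv ℂ g v u)) := by
    have hline : HasDerivAt (fun t : ℂ => g (v + t • u)) (fderiv ℂ g v u) 0 := by
      simpa [Function.comp_def] using (hdiff v hv).hasFDerivAt.comp_hasDerivAt_of_eq (0 : ℂ)
        (((hasDerivAt_id 0).smul_const u).const_add v) (by simp)
    simpa using hasDerivAt_iff_tendsto_slope_zero.1 hline
  have hψ_lim : Tendsto ψ (cocompact ℂ) (𝓝 (fderiv ℂ g v u)) := by
    rw [← Metric.cobounded_eq_cocompact]
    refine (hslope.comp tendsto_inv₀_cobounded').congr' ?_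
    filter_upwards [(tendsto_norm_cobounded_atTop (E := ℂ)).eventually_gt_atTop 0] with a ha
    have ha0 : a ≠ 0 := norm_pos_iff.1 ha
    simp only [Function.comp_apply, inv_inv, ψ, smul_sub]
    rw [← hsmul, smul_add, smul_smul, mul_inv_cancel₀ ha0, one_smul, add_comm]
  have h1 := hψ.apply_eq_of_tendsto_cocompact 1 hψ_lim
  have h0 := hψ.apply_eq_of_tendsto_cocompact 0 hψ_lim
  simp only [ψ, one_smul, zero_smul, add_zero, sub_zero] at h1 h0
  rw [← h0] at h1
  exact eq_add_of_sub_eq' h1 |>.trans (add_comm _ _)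

end ComplexDifferentiability

section SecondDerivative

variable {E F : Type*} [NormedAddCommGroup E] [NormedSpace ℝ E]
  [NormedAddCommGroup F] [NormedSpace ℝ F]

theorem hasFDerivAt_fderiv_apply {F : Type*} [NormedAddCommGroup F] [NormedSpace ℝ F]
    {g : E → F} {z : E} (hg : DifferentiableAt ℝ (fderiv ℝ g) z) (w : E) :
    HasFDerivAt (fun x => fderiv ℝ g x w) ((fderiv ℝ (fderiv ℝ g) z).flip w) z := by
  simpa using hg.hasFDerivAt.clm_apply (hasFDerivAt_const w z)

theorem ContDiffAt.differentiableAt_fderiv {F : Type*} [NormedAddCommGroup F] [NormedSpace ℝ F]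
    {g : E → F} {z : E} (hg : ContDiffAt ℝ 2 g z) : DifferentiableAt ℝ (fderiv ℝ g) z :=
  (hg.fderiv_right (m := 1) (by norm_num)).differentiableAt one_ne_zero

theorem fderiv_fderiv_apply_bilinear_self {E G : Type*} [NormedAddCommGroup E] [NormedSpace ℝ E]
    [NormedAddCommGroup G] [NormedSpace ℝ G] (B : E →L[ℝ] E →L[ℝ] G) (z v w : E) :
    fderiv ℝ (fun x => fderiv ℝ (fun x => B x x) x w) z v = B v w + B w v := by
  have hfderiv : ∀ x, fderiv ℝ (fun x => B x x) x = B x + B.flip x := fun x => by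
    simpa using (B.hasFDerivAt.clm_apply (hasFDerivAt_id x)).fderiv
  have hlin : (fun x => fderiv ℝ (fun x => B x x) x w) = ⇑(B.flip w + B w) := by
    ext x
    simp [hfderiv]
  rw [hlin, ContinuousLinearMap.fderiv]
  simp

end SecondDerivative

section Wirtinger

variable {E : Type*} [NormedAddCommGroup E] [NormedSpace ℂ E] {f : E → ℝ}

/-- `∑ₖ ∂f/∂z̄ₖ(z) · conj wₖ` in coordinates: the conjugate-linear part of the real differential,
`Df(z) w = 2 Re (wirtingerBar f z w)`. -/
noncomputable def wirtingerBar (f : E → ℝ) (z w : E) : ℂ :=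
  (fderiv ℝ f z w + I * fderiv ℝ f z (I • w)) / 2

theorem re_wirtingerBar (z w : E) : (wirtingerBar f z w).re = fderiv ℝ f z w / 2 := by
  simp [wirtingerBar]

theorem wirtingerBar_add_right (z w w' : E) :
    wirtingerBar f z (w + w') = wirtingerBar f z w + wirtingerBar f z w' := by
  simp only [wirtingerBar, smul_add, map_add]
  push_cast
  ring

theorem wirtingerBar_smul_right (z : E) (c : ℂ) (w : E) :
    wirtingerBar f z (c • w) = conj c * wirtingerBar f z w := by
  have hI : I • c • w = c • I • w := smul_comm I c w
  have hII : I • I • w = -w := by rw [smul_smul, I_mul_I, neg_one_smul]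
  simp only [wirtingerBar, hI, map_complex_smul_eq (fderiv ℝ f z) c, hII, map_neg, smul_eq_mul]
  conv_rhs => rw [← re_add_im c]
  simp only [map_add, map_mul, conj_ofReal, conj_I]
  push_cast
  linear_combination (c.im * (fderiv ℝ f z (I • w) : ℂ) / 2) * I_sq

/-- The Cauchy–Riemann equations for `z ↦ wirtingerBar f z w` reduce to the invariance of the
Hessian under multiplication of both arguments by `I`. -/
theorem differentiableAt_wirtingerBar {z : E} (hf : ContDiffAt ℝ 2 f z)
    (hJ : ∀ v w, fderiv ℝ (fderiv ℝ f) z (I • v) (I • w) = fderiv ℝ (fderiv ℝ f) z v w) (w : E) :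
    DifferentiableAt ℂ (wirtingerBar f · w) z := by
  have hre := fun u =>
    ofRealCLM.hasFDerivAt.comp z (hasFDerivAt_fderiv_apply hf.differentiableAt_fderiv u)
  have hW := ((hre w).add ((hre (I • w)).const_mul I)).const_mul (2⁻¹ : ℂ)
  refine HasFDerivAt.differentiableAt_complex (hW.congr_of_eventuallyEq ?_) fun v => ?_
  · exact Eventually.of_forall fun x => by simp [wirtingerBar]; ring
  · have hJ' : fderiv ℝ (fderiv ℝ f) z (I • v) w = -fderiv ℝ (fderiv ℝ f) z v (I • w) := by
      rw [← hJ v (I • w), smul_smul, I_mul_I, neg_one_smul, map_neg, neg_neg]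
    simp only [smul_add, add_apply, smul_apply,
      ContinuousLinearMap.comp_apply, ContinuousLinearMap.flip_apply, hJ, hJ', ofRealCLM_apply,
      ofReal_neg, smul_eq_mul, mul_neg]
    linear_combination (-(fderiv ℝ (fderiv ℝ f) z v (I • w) : ℂ) / 2) * I_sq

theorem apply_real_smul_of_apply_smul (hhom : ∀ (l : ℂ) x, f (l • x) = ‖l‖ ^ 2 * f x)
    (t : ℝ) (x : E) : f (t • x) = t ^ 2 * f x := by
  rw [← coe_smul, hhom, norm_real, Real.norm_eq_abs, sq_abs]

theorem fderiv_smul_apply_self {z : E} (hhom : ∀ t : ℝ, f (t • z) = t ^ 2 * f z) (t₀ : ℝ)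
    (hd : DifferentiableAt ℝ f (t₀ • z)) : fderiv ℝ f (t₀ • z) z = 2 * t₀ * f z := by
  have hray : HasDerivAt (fun t : ℝ => f (t • z)) (fderiv ℝ f (t₀ • z) z) t₀ := by
    simpa [Function.comp_def] using
      hd.hasFDerivAt.comp_hasDerivAt t₀ ((hasDerivAt_id t₀).smul_const z)
  have hsq : HasDerivAt (fun t : ℝ => f (t • z)) (2 * t₀ * f z) t₀ := by
    simp_rw [hhom]
    simpa using (hasDerivAt_pow 2 t₀).mul_const (f z)
  exact hray.unique hsq

theorem fderiv_zero_of_apply_smul (hhom : ∀ (t : ℝ) x, f (t • x) = t ^ 2 * f x) :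
    fderiv ℝ f 0 = 0 := by
  by_cases hd : DifferentiableAt ℝ f 0
  · ext z
    have hd' : DifferentiableAt ℝ f ((0 : ℝ) • z) := by rwa [zero_smul]
    simpa using fderiv_smul_apply_self (hhom · z) 0 hd'
  · exact fderiv_zero_of_not_differentiableAt hd

theorem fderiv_smul_apply_smul {l : ℂ} {z : E} (hhom : ∀ x, f (l • x) = ‖l‖ ^ 2 * f x)
    (hz : DifferentiableAt ℝ f z) (hlz : DifferentiableAt ℝ f (l • z)) (w : E) :
    fderiv ℝ f (l • z) (l • w) = ‖l‖ ^ 2 * fderiv ℝ f z w := by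
  let m : E →L[ℝ] E := ContinuousLinearMap.lsmul ℝ ℂ l
  have hcomp : HasFDerivAt (fun x => f (l • x)) ((fderiv ℝ f (l • z)).comp m) z :=
    hlz.hasFDerivAt.comp z m.hasFDerivAt
  have hscaled : HasFDerivAt (fun x => f (l • x)) ((‖l‖ ^ 2) • fderiv ℝ f z) z := by
    simpa only [hhom] using hz.hasFDerivAt.const_mul (‖l‖ ^ 2)
  simpa [m] using congrArg (· w) (hcomp.unique hscaled)

variable (hdiff : ∀ z ≠ 0, DifferentiableAt ℝ f z) (hhom : ∀ (l : ℂ) x, f (l • x) = ‖l‖ ^ 2 * f x)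
include hdiff hhom

theorem wirtingerBar_smul_left (l : ℂ) (z w : E) :
    wirtingerBar f (l • z) w = l * wirtingerBar f z w := by
  have hzero : ∀ w, wirtingerBar f 0 w = 0 := by
    simp [wirtingerBar, fderiv_zero_of_apply_smul (apply_real_smul_of_apply_smul hhom)]
  rcases eq_or_ne l 0 with rfl | hl
  · simp [hzero]
  rcases eq_or_ne z 0 with rfl | hz
  · simp [hzero]
  have hrescale : ∀ u, fderiv ℝ f (l • z) u = ‖l‖ ^ 2 * fderiv ℝ f z (l⁻¹ • u) := fun u => by
    simpa [smul_inv_smul₀ hl] using fderiv_smul_apply_smul (hhom l) (hdiff z hz)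
      (hdiff _ (smul_ne_zero hl hz)) (l⁻¹ • u)
  calc wirtingerBar f (l • z) w = (‖l‖ : ℂ) ^ 2 * wirtingerBar f z (l⁻¹ • w) := by
        simp only [wirtingerBar, hrescale, smul_comm I l⁻¹ w]
        push_cast
        ring
    _ = l * wirtingerBar f z w := by
        rw [wirtingerBar_smul_right, ← mul_conj', map_inv₀]
        field_simp [(map_ne_zero (starRingEnd ℂ)).2 hl]

theorem re_wirtingerBar_self (z : E) : (wirtingerBar f z z).re = f z := by
  rcases eq_or_ne z 0 with rfl | hz
  · have hzero := wirtingerBar_smul_left hdiff hhom 0 0 0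
    rw [zero_smul, zero_mul] at hzero
    simpa [hzero] using (hhom 0 0).symm
  have heuler := fderiv_smul_apply_self (apply_real_smul_of_apply_smul hhom · z) 1
    (by simpa using hdiff z hz)
  rw [re_wirtingerBar]
  simp only [one_smul] at heuler
  linarith

end Wirtinger

section Linearity

variable {E : Type*} [NormedAddCommGroup E] [NormedSpace ℂ E] {f : E → ℝ}
  (hf : ∀ z ≠ 0, ContDiffAt ℝ 2 f z) (hhom : ∀ (l : ℂ) x, f (l • x) = ‖l‖ ^ 2 * f x)
  (hJ : ∀ z ≠ 0, ∀ v w, fderiv ℝ (fderiv ℝ f) z (I • v) (I • w) = fderiv ℝ (fderiv ℝ f) z v w)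
include hf hhom hJ

theorem wirtingerBar_add_left (u v w : E) :
    wirtingerBar f (u + v) w = wirtingerBar f u w + wirtingerBar f v w :=
  map_add_of_map_smul_of_differentiableAt (g := (wirtingerBar f · w))
    (wirtingerBar_smul_left (fun z hz => (hf z hz).differentiableAt (by norm_num)) hhom · · w)
    (fun z hz => differentiableAt_wirtingerBar (hf z hz) (hJ z hz) w) u v

end Linearity

section Coordinates

variable {ι : Type*} [Fintype ι]

theorem Matrix.ofReal_re_sum_mul_conj_mul (M : Matrix ι ι ℂ) (z : ι → ℂ) :
    ((∑ j, ∑ k, M j k * conj (z j) * z k).re : ℂ)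
      = 1 / 2 * ∑ j, ∑ k, (M + Mᴴ) j k * conj (z j) * z k := by
  rw [re_eq_add_conj]
  simp only [map_sum, map_mul, conj_conj, Matrix.add_apply, Matrix.conjTranspose_apply,
    RCLike.star_def, add_mul, Finset.sum_add_distrib]
  rw [Finset.sum_comm (f := fun j k => conj (M j k) * z j * conj (z k)), one_div, inv_mul_eq_div]
  congr 2
  exact Finset.sum_congr rfl fun _ _ => Finset.sum_congr rfl fun _ _ => mul_right_comm _ _ _

noncomputable def Matrix.reSesqForm (h : Matrix ι ι ℂ) : (ι → ℂ) →L[ℝ] (ι → ℂ) →L[ℝ] ℝ :=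
  LinearMap.toContinuousLinearMap <| LinearMap.toContinuousLinearMap.toLinearMap ∘ₗ
    LinearMap.mk₂ ℝ (fun u v => (∑ j, ∑ k, h j k * conj (u j) * v k).re)
      (fun u u' v => by simp [mul_add, add_mul, Finset.sum_add_distrib])
      (fun t u v => by
        simp only [Pi.smul_apply, real_smul, map_mul, conj_ofReal, smul_eq_mul, ← re_ofReal_mul,
          Finset.mul_sum, mul_assoc, mul_left_comm])
      (fun u v v' => by simp [mul_add, add_mul, Finset.sum_add_distrib])
      (fun t u v => by
        simp only [Pi.smul_apply, real_smul, smul_eq_mul, ← re_ofReal_mul, Finset.mul_sum,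
          mul_assoc, mul_left_comm])

theorem Matrix.reSesqForm_apply (h : Matrix ι ι ℂ) (u v : ι → ℂ) :
    h.reSesqForm u v = (∑ j, ∑ k, h j k * conj (u j) * v k).re :=
  rfl

theorem Matrix.reSesqForm_I_smul (h : Matrix ι ι ℂ) (u v : ι → ℂ) :
    h.reSesqForm (I • u) (I • v) = h.reSesqForm u v := by
  simp only [Matrix.reSesqForm_apply, Pi.smul_apply, smul_eq_mul, map_mul, conj_I]
  congr 1
  exact Finset.sum_congr rfl fun j _ => Finset.sum_congr rfl fun k _ => by
    linear_combination (-(h j k * conj (u j) * v k)) * I_sq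

variable [DecidableEq ι]

theorem apply_eq_sum_mul_single {g : (ι → ℂ) → ℂ} (hadd : ∀ x y, g (x + y) = g x + g y)
    (hsmul : ∀ (c : ℂ) x, g (c • x) = c * g x) (z : ι → ℂ) :
    g z = ∑ j, z j * g (Pi.single j 1) := by
  let L : (ι → ℂ) →ₗ[ℂ] ℂ := { toFun := g, map_add' := hadd, map_smul' := hsmul }
  change L z = ∑ j, z j * L (Pi.single j 1)
  conv_lhs => rw [pi_eq_sum_univ' z]
  simp [map_sum]

variable {f : (ι → ℂ) → ℝ} (hf : ∀ z ≠ 0, ContDiffAt ℝ 2 f z)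
  (hhom : ∀ (l : ℂ) x, f (l • x) = ‖l‖ ^ 2 * f x)
  (hJ : ∀ z ≠ 0, ∀ v w, fderiv ℝ (fderiv ℝ f) z (I • v) (I • w) = fderiv ℝ (fderiv ℝ f) z v w)
include hf hhom hJ

theorem wirtingerBar_eq_sum (z w : ι → ℂ) :
    wirtingerBar f z w
      = ∑ j, ∑ k, z j * conj (w k) * wirtingerBar f (Pi.single j 1) (Pi.single k 1) := by
  have hdiff : ∀ z ≠ 0, DifferentiableAt ℝ f z := fun z hz =>
    (hf z hz).differentiableAt (by norm_num)
  rw [apply_eq_sum_mul_single (g := (wirtingerBar f · w)) (wirtingerBar_add_left hf hhom hJ · · w)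
    (wirtingerBar_smul_left hdiff hhom · · w)]
  refine Finset.sum_congr rfl fun j _ => ?_
  have hconj := apply_eq_sum_mul_single (g := fun w => conj (wirtingerBar f (Pi.single j 1) w))
    (fun w w' => by simp [wirtingerBar_add_right]) (fun c w => by simp [wirtingerBar_smul_right]) w
  rw [← conj_conj (wirtingerBar f _ w), hconj]
  simp [Finset.mul_sum, mul_assoc]

theorem exists_isHermitian_of_fderiv_fderiv_I_smul :
    ∃ h : Matrix ι ι ℂ, h.IsHermitian ∧
      ∀ z, (f z : ℂ) = 1 / 2 * ∑ j, ∑ k, h j k * conj (z j) * z k := by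
  have hdiff : ∀ z ≠ 0, DifferentiableAt ℝ f z := fun z hz =>
    (hf z hz).differentiableAt (by norm_num)
  let M : Matrix ι ι ℂ := Matrix.of fun j k => wirtingerBar f (Pi.single k 1) (Pi.single j 1)
  refine ⟨M + Mᴴ, M.isHermitian_add_transpose_self, fun z => ?_⟩
  rw [← re_wirtingerBar_self hdiff hhom z, wirtingerBar_eq_sum hf hhom hJ, Finset.sum_comm,
    ← Matrix.ofReal_re_sum_mul_conj_mul]
  congr 2
  exact Finset.sum_congr rfl fun _ _ => Finset.sum_congr rfl fun _ _ => by
    simp only [M, Matrix.of_apply]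
    ring

end Coordinates

section Tensors

variable {n : ℕ}

theorem I_smul_dir1 (j : Fin n) : I • dir1 n j = dir2 n j := by
  rw [dir1, dir2, ← Pi.single_smul, smul_eq_mul, mul_one]

theorem I_smul_dir2 (j : Fin n) : I • dir2 n j = -dir1 n j := by
  rw [← I_smul_dir1, smul_smul, I_mul_I, neg_one_smul]

theorem bilinear_I_smul_iff (B : (Fin n → ℂ) →L[ℝ] (Fin n → ℂ) →L[ℝ] ℝ) :
    (∀ v w, B (I • v) (I • w) = B v w) ↔
      ∀ j k, B (dir1 n j) (dir1 n k) = B (dir2 n j) (dir2 n k) ∧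
        B (dir1 n j) (dir2 n k) = -B (dir2 n j) (dir1 n k) := by
  constructor
  · intro hB j k
    refine ⟨by rw [← hB, I_smul_dir1, I_smul_dir1], ?_⟩
    rw [← hB, I_smul_dir1, I_smul_dir2, map_neg]
  · intro hB
    let J : (Fin n → ℂ) →L[ℝ] (Fin n → ℂ) := ContinuousLinearMap.lsmul ℝ ℂ I
    suffices B.bilinearComp J J = B from fun v w => congr($this v w)
    let b := Pi.basis fun _ : Fin n => basisOneI
    rw [← ContinuousLinearMap.toLinearMap₁₂_inj]
    refine LinearMap.ext_basis b b fun ⟨j, p⟩ ⟨k, q⟩ => ?_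
    have hb : ∀ j, b ⟨j, 0⟩ = dir1 n j ∧ b ⟨j, 1⟩ = dir2 n j := fun j => by
      simp [b, dir1, dir2]
    fin_cases p <;> fin_cases q <;>
      simp [J, (hb j).1, (hb j).2, (hb k).1, (hb k).2, I_smul_dir1, I_smul_dir2, (hB j k).1,
        (hB j k).2]

variable {F : (Fin n → ℝ) → (Fin n → ℂ) → ℝ} {y : Fin n → ℝ} {z : Fin n → ℂ}

theorem aTensor_bTensor_eq_zero_iff {B : (Fin n → ℂ) →L[ℝ] (Fin n → ℂ) →L[ℝ] ℝ}
    (hB : ∀ v w, secondDeriv n F y z v w = B v w) :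
    (∀ j k, aTensor n F y z j k = 0 ∧ bTensor n F y z j k = 0) ↔
      ∀ v w, B (I • v) (I • w) = B v w := by
  rw [bilinear_I_smul_iff]
  simp only [aTensor, bTensor, hB]
  refine forall₂_congr fun j k => and_congr ?_ ?_ <;> constructor <;> intro h <;> linarith

theorem secondDeriv_eq_fderiv_fderiv (hF : ContDiffAt ℝ 2 (F y) z) (v w : Fin n → ℂ) :
    secondDeriv n F y z v w = fderiv ℝ (fderiv ℝ (F y)) z v w := by
  rw [secondDeriv, (hasFDerivAt_fderiv_apply hF.differentiableAt_fderiv w).fderiv]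
  rfl

end Tensors

/-- `a_{jk} = b_{jk} = 0` everywhere (for `z ≠ 0`) iff
`F(y,z) = ½ h_{jk}(y) conj(z^j) z^k` for some Hermitian tensor `h(y)` independent of `z`. -/
theorem aTensor_bTensor_vanish_iff_hermitian_form
    (n : ℕ) (F : (Fin n → ℝ) → (Fin n → ℂ) → ℝ)
    (hF : ∀ (y : Fin n → ℝ) (z : Fin n → ℂ), z ≠ 0 → ContDiffAt ℝ 2 (F y) z)
    (hhom : ∀ (l : ℂ) (y : Fin n → ℝ) (z : Fin n → ℂ),
      F y (l • z) = ‖l‖ ^ 2 * F y z) :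
    (∀ (y : Fin n → ℝ) (z : Fin n → ℂ), z ≠ 0 → ∀ j k : Fin n,
      aTensor n F y z j k = 0 ∧ bTensor n F y z j k = 0) ↔
    (∃ h : (Fin n → ℝ) → Matrix (Fin n) (Fin n) ℂ,
      (∀ y : Fin n → ℝ, (h y).IsHermitian) ∧
      ∀ (y : Fin n → ℝ) (z : Fin n → ℂ),
        (F y z : ℂ) = (1 / 2 : ℂ) * ∑ j : Fin n, ∑ k : Fin n,
          h y j k * (starRingEnd ℂ) (z j) * z k) := by
  constructor
  · intro hab
    have hJ : ∀ y, ∀ z ≠ 0, ∀ v w, fderiv ℝ (fderiv ℝ (F y)) z (I • v) (I • w)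
        = fderiv ℝ (fderiv ℝ (F y)) z v w := fun y z hz =>
      (aTensor_bTensor_eq_zero_iff (secondDeriv_eq_fderiv_fderiv (hF y z hz))).1 (hab y z hz)
    choose h hherm hform using fun y =>
      exists_isHermitian_of_fderiv_fderiv_I_smul (hF y) (hhom · y) (hJ y)
    exact ⟨h, hherm, hform⟩
  · rintro ⟨h, -, hform⟩ y z -
    let B := (2⁻¹ : ℝ) • (h y).reSesqForm
    have hFy : F y = fun x => B x x := funext fun x => by
      simpa [B, Matrix.reSesqForm_apply, div_eq_inv_mul] using congrArg re (hform y x)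
    refine (aTensor_bTensor_eq_zero_iff (B := B + B.flip) fun v w => ?_).2 fun v w => ?_
    · rw [secondDeriv, hFy, fderiv_fderiv_apply_bilinear_self]
      rfl
    · simp [B, Matrix.reSesqForm_I_smul]
end

section
/- Let F satisfy the conformal invariance identities ∂F/∂z^j_1 z^j_1 + ∂F/∂z^j_2 z^j_2 = 2F and ∂F/∂z^j_1 z^j_2 − ∂F/∂z^j_2 z^j_1 = 0 and suppose z solves the Carathéodory field equations ∂F/∂z^j_1(y,z) = A_{j,k} z^k_2 + A_{j,n+2} and ∂F/∂z^k_2(y,z) = A_{j,k} z^j_1 + A_{n+1,k}, where A is an antisymmetric (n+2)×(n+2) real matrix. Then A_{n+1,j} z^j_1 − A_{j,n+2} z^j_2 = 0. -/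
open scoped BigOperators Matrix

/-- If `F` satisfies the conformal-invariance (Euler) identities and `z`
solves the Carathéodory field equations with antisymmetric `(n+2)×(n+2)` matrix `A`,
then `A_{n+1,j} z^j_1 − A_{j,n+2} z^j_2 = 0`. -/
theorem caratheodory_field_equations_identity
    (n : ℕ) (F : (Fin n → ℝ) → (Fin n → ℂ) → ℝ)
    (A : Matrix (Fin (n + 2)) (Fin (n + 2)) ℝ) (hA : Aᵀ = -A)
    (y : Fin n → ℝ) (z : Fin n → ℂ)
    (heuler1 : (∑ j : Fin n, fderiv ℝ (F y) z (Pi.single j 1) * (z j).re)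
        + (∑ j : Fin n, fderiv ℝ (F y) z (Pi.single j Complex.I) * (z j).im)
        = 2 * F y z)
    (heuler2 : (∑ j : Fin n, fderiv ℝ (F y) z (Pi.single j 1) * (z j).im)
        - (∑ j : Fin n, fderiv ℝ (F y) z (Pi.single j Complex.I) * (z j).re)
        = 0)
    (hfe1 : ∀ j : Fin n, fderiv ℝ (F y) z (Pi.single j 1)
        = (∑ k : Fin n, A (Fin.castAdd 2 j) (Fin.castAdd 2 k) * (z k).im)
          + A (Fin.castAdd 2 j) ⟨n + 1, by omega⟩)
    (hfe2 : ∀ k : Fin n, fderiv ℝ (F y) z (Pi.single k Complex.I)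
        = (∑ j : Fin n, A (Fin.castAdd 2 j) (Fin.castAdd 2 k) * (z j).re)
          + A ⟨n, by omega⟩ (Fin.castAdd 2 k)) :
    (∑ j : Fin n, A ⟨n, by omega⟩ (Fin.castAdd 2 j) * (z j).re)
      - (∑ j : Fin n, A (Fin.castAdd 2 j) ⟨n + 1, by omega⟩ * (z j).im) = 0 := by
  have hanti : ∀ i j, A j i = - A i j := by
    intro i j
    have := congrFun (congrFun hA i) j
    simpa [Matrix.transpose_apply] using this
  have key : ∀ c : Fin n → ℝ,
      ∑ j : Fin n, ∑ k : Fin n,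
        A (Fin.castAdd 2 j) (Fin.castAdd 2 k) * c k * c j = 0 := by
    intro c
    have hswap :
        (∑ j : Fin n, ∑ k : Fin n, A (Fin.castAdd 2 j) (Fin.castAdd 2 k) * c k * c j)
        = ∑ j : Fin n, ∑ k : Fin n, A (Fin.castAdd 2 k) (Fin.castAdd 2 j) * c j * c k :=
      Finset.sum_comm
    have hneg :
        (∑ j : Fin n, ∑ k : Fin n, A (Fin.castAdd 2 k) (Fin.castAdd 2 j) * c j * c k)
        = - ∑ j : Fin n, ∑ k : Fin n, A (Fin.castAdd 2 j) (Fin.castAdd 2 k) * c k * c j := by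
      rw [← Finset.sum_neg_distrib]
      refine Finset.sum_congr rfl fun j _ => ?_
      rw [← Finset.sum_neg_distrib]
      refine Finset.sum_congr rfl fun k _ => ?_
      rw [hanti (Fin.castAdd 2 j) (Fin.castAdd 2 k)]
      ring
    linarith [hswap.trans hneg]
  simp_rw [hfe1, hfe2, add_mul, Finset.sum_add_distrib, Finset.sum_mul] at heuler2
  have h1 := key fun j => (z j).im
  have h2 := key fun j => (z j).re
  have h2' : ∑ x : Fin n, ∑ i : Fin n,
      A (Fin.castAdd 2 i) (Fin.castAdd 2 x) * (z i).re * (z x).re = 0 := by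
    rw [Finset.sum_comm]
    rw [← h2]
    exact Finset.sum_congr rfl fun j _ => Finset.sum_congr rfl fun k _ => by ring
  linarith [heuler2, h1, h2']
end
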